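/- The quotient polynomial (t¹⁵⁰⁴ − t¹⁴²⁴ − 4t¹¹²⁸ + 4t¹⁰⁸⁸ + 4t⁴¹⁶ − 4t³⁷⁶ − t⁸⁰ + 1)/(t²−1)⁴ has only non-negative integer coefficients. -/
import Mathlib

open Polynomial

noncomputable def auxA : Polynomial ℤ := 1 + X ^ 2 + X ^ 4 + X ^ 6

noncomputable def auxH (n : ℕ) : Polynomial ℤ := ∑ i ∈ Finset.range n, (X ^ 8) ^ i

lemma aux_key (n : ℕ) : (X ^ 2 - 1) * (auxA * auxH n) = X ^ (8 * n) - 1 := by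
  have h1 : (X ^ 2 - 1 : Polynomial ℤ) * auxA = X ^ 8 - 1 := by unfold auxA; ring
  calc (X ^ 2 - 1) * (auxA * auxH n) = auxH n * ((X ^ 8 : Polynomial ℤ) - 1) := by
        rw [← mul_assoc, h1]; ring
    _ = (X ^ 8 : Polynomial ℤ) ^ n - 1 := geom_sum_mul _ n
    _ = X ^ (8 * n) - 1 := by rw [← pow_mul]

lemma aux_mul_nonneg {p q : Polynomial ℤ} (hp : ∀ k, 0 ≤ p.coeff k)
    (hq : ∀ k, 0 ≤ q.coeff k) : ∀ k, 0 ≤ (p * q).coeff k := fun k => by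
  rw [coeff_mul]
  exact Finset.sum_nonneg fun x _ => mul_nonneg (hp _) (hq _)

lemma aux_Xpow_nonneg (n : ℕ) : ∀ k, 0 ≤ (X ^ n : Polynomial ℤ).coeff k := fun k => by
  rw [coeff_X_pow]; split_ifs <;> norm_num

lemma aux_A_nonneg : ∀ k, 0 ≤ auxA.coeff k := fun k => by
  unfold auxA
  simp only [coeff_add, coeff_one, coeff_X_pow]
  split_ifs <;> norm_num

lemma aux_H_nonneg (n : ℕ) : ∀ k, 0 ≤ (auxH n).coeff k := fun k => by
  unfold auxH
  rw [finset_sum_coeff]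
  exact Finset.sum_nonneg fun i _ => by
    rw [← pow_mul]; exact aux_Xpow_nonneg _ _

/-- The quotient (t¹⁵⁰⁴ − t¹⁴²⁴ − 4t¹¹²⁸ + 4t¹⁰⁸⁸ + 4t⁴¹⁶ − 4t³⁷⁶ − t⁸⁰ + 1)/(t²−1)⁴,
as a polynomial in ℤ[t], has only non-negative coefficients. -/
theorem stmt_4 :
    ∃ Q : Polynomial ℤ,
      (X ^ 1504 - X ^ 1424 - 4 * X ^ 1128 + 4 * X ^ 1088
        + 4 * X ^ 416 - 4 * X ^ 376 - X ^ 80 + 1) = (X ^ 2 - 1) ^ 4 * Q ∧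
      ∀ k : ℕ, 0 ≤ Q.coeff k := by
  refine ⟨(auxA * auxH 5) * ((auxA * auxH 89) *
      ((auxA * auxH 47) ^ 2 + X ^ 40 * (auxA * auxH 42) ^ 2)), ?_, ?_⟩
  · have e5 := aux_key 5
    have e89 := aux_key 89
    have e47 := aux_key 47
    have e42 := aux_key 42
    norm_num at e5 e89 e47 e42
    rw [show (X ^ 2 - 1 : Polynomial ℤ) ^ 4 * ((auxA * auxH 5) * ((auxA * auxH 89) *
        ((auxA * auxH 47) ^ 2 + X ^ 40 * (auxA * auxH 42) ^ 2)))
      = ((X ^ 2 - 1) * (auxA * auxH 5)) * (((X ^ 2 - 1) * (auxA * auxH 89)) *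
        (((X ^ 2 - 1) * (auxA * auxH 47)) ^ 2
          + X ^ 40 * ((X ^ 2 - 1) * (auxA * auxH 42)) ^ 2)) from by ring,
      e5, e89, e47, e42]
    ring
  · exact aux_mul_nonneg (aux_mul_nonneg aux_A_nonneg (aux_H_nonneg 5))
      (aux_mul_nonneg (aux_mul_nonneg aux_A_nonneg (aux_H_nonneg 89))
        (fun k => by
          rw [coeff_add, sq, sq]
          exact add_nonneg
            ((aux_mul_nonneg (aux_mul_nonneg aux_A_nonneg (aux_H_nonneg 47))
              (aux_mul_nonneg aux_A_nonneg (aux_H_nonneg 47))) k)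
            ((aux_mul_nonneg (aux_Xpow_nonneg 40)
              (aux_mul_nonneg (aux_mul_nonneg aux_A_nonneg (aux_H_nonneg 42))
                (aux_mul_nonneg aux_A_nonneg (aux_H_nonneg 42)))) k)))
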